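/- Let λ₁, λ₂ ≥ 0 with λ₂ > 0, and define Ω on symmetric d×d real matrices by Ω(B) = λ₁ tr B + (λ₂/2)‖B‖_F² if B is positive semi-definite and Ω(B) = +∞ otherwise. Then the Fenchel conjugate of Ω (with respect to the Frobenius inner product on symmetric matrices) satisfies Ω*(B) = (1/(2λ₂)) ‖[B − λ₁ I]₊‖_F², where [M]₊ denotes the positive part of M (replacing negative eigenvalues by zero in an eigendecomposition). -/

import Mathlib

/-!
With `⟨X, Y⟩ = ∑ᵢⱼ (X ⊙ Y)ᵢⱼ` the Frobenius inner product, write `C = B - λ₁ I = C⁺ - C⁻`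
with `C⁺, C⁻ ⪰ 0` and `C⁺ C⁻ = 0`. The objective becomes `⟨A, C⟩ - (λ₂/2)‖A‖²`. For `A ⪰ 0`
the Schur product theorem gives `⟨A, C⁻⟩ ≥ 0`, so the objective is at most
`⟨A, C⁺⟩ - (λ₂/2)‖A‖² ≤ ‖C⁺‖²/(2λ₂)` by completing the square entrywise; since
`⟨C⁺, C⁻⟩ = tr (C⁺ C⁻) = 0`, the bound is attained at `A = C⁺/λ₂`.
-/

open Matrix
open scoped MatrixOrder ComplexOrder

namespace Matrix

variable {n : Type*} [Fintype n]

theorem sum_hadamard_nonneg {𝕜 : Type*} [RCLike 𝕜] {A B : Matrix n n 𝕜}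
    (hA : A.PosSemidef) (hB : B.PosSemidef) : 0 ≤ ∑ i, ∑ j, (A ⊙ B) i j := by
  simpa [dotProduct, mulVec, Finset.mul_sum] using
    (hA.hadamard hB).dotProduct_mulVec_nonneg (fun _ => 1)

theorem sum_hadamard_sub_smul_one [DecidableEq n] {R : Type*} [CommRing R]
    (A B : Matrix n n R) (c : R) :
    ∑ i, ∑ j, (A ⊙ (B - c • 1)) i j = ∑ i, ∑ j, (A ⊙ B) i j - c * A.trace := by
  rw [sum_hadamard_eq, sum_hadamard_eq, transpose_sub, transpose_smul, transpose_one, mul_sub,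
    trace_sub, Matrix.mul_smul, Matrix.mul_one, trace_smul, smul_eq_mul]

theorem sum_hadamard_sub_sum_sq_le (A P : Matrix n n ℝ) {μ : ℝ} (hμ : 0 < μ) :
    ∑ i, ∑ j, (A ⊙ P) i j - μ / 2 * ∑ i, ∑ j, A i j ^ 2 ≤ 1 / (2 * μ) * ∑ i, ∑ j, P i j ^ 2 := by
  have entry (a p : ℝ) : a * p - μ / 2 * a ^ 2 ≤ 1 / (2 * μ) * p ^ 2 := by
    have square : 1 / (2 * μ) * p ^ 2 - (a * p - μ / 2 * a ^ 2) = (p - μ * a) ^ 2 / (2 * μ) := by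
      field_simp
      ring
    rw [← sub_nonneg, square]
    positivity
  simp only [Finset.mul_sum, ← Finset.sum_sub_distrib, hadamard_apply]
  gcongr with i _ j _
  exact entry _ _

variable [DecidableEq n]

theorem sum_hadamard_eq_posPart_sub_negPart (A : Matrix n n ℝ) {C : Matrix n n ℝ}
    (hC : IsSelfAdjoint C) :
    ∑ i, ∑ j, (A ⊙ C) i j = ∑ i, ∑ j, (A ⊙ C⁺) i j - ∑ i, ∑ j, (A ⊙ C⁻) i j := by
  calc ∑ i, ∑ j, (A ⊙ C) i j = ∑ i, ∑ j, (A ⊙ (C⁺ - C⁻)) i j := by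
        rw [CFC.posPart_sub_negPart C hC]
    _ = _ := by simp only [hadamard_apply, sub_apply, mul_sub, Finset.sum_sub_distrib]

theorem sum_hadamard_posPart_negPart (C : Matrix n n ℝ) :
    ∑ i, ∑ j, (C⁺ ⊙ C⁻) i j = 0 := by
  have hsymm : (C⁻)ᵀ = C⁻ := by
    simpa using (CFC.negPart_nonneg C).posSemidef.isHermitian.eq
  rw [sum_hadamard_eq, hsymm, CFC.posPart_mul_negPart, trace_zero]

theorem sum_hadamard_sub_sum_sq_le_of_posSemidef {A C : Matrix n n ℝ} (hA : A.PosSemidef)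
    (hC : IsSelfAdjoint C) {μ : ℝ} (hμ : 0 < μ) :
    ∑ i, ∑ j, (A ⊙ C) i j - μ / 2 * ∑ i, ∑ j, A i j ^ 2 ≤ 1 / (2 * μ) * ∑ i, ∑ j, C⁺ i j ^ 2 := by
  rw [sum_hadamard_eq_posPart_sub_negPart A hC]
  linarith [sum_hadamard_nonneg hA (CFC.negPart_nonneg C).posSemidef,
    sum_hadamard_sub_sum_sq_le A C⁺ hμ]

theorem sum_hadamard_sub_sum_sq_inv_smul_posPart {C : Matrix n n ℝ} (hC : IsSelfAdjoint C) {μ : ℝ}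
    (hμ : 0 < μ) :
    ∑ i, ∑ j, ((μ⁻¹ • C⁺) ⊙ C) i j - μ / 2 * ∑ i, ∑ j, (μ⁻¹ • C⁺) i j ^ 2 =
      1 / (2 * μ) * ∑ i, ∑ j, C⁺ i j ^ 2 := by
  have hcross := sum_hadamard_posPart_negPart C
  rw [sum_hadamard_eq_posPart_sub_negPart _ hC, smul_hadamard, smul_hadamard]
  simp only [smul_apply, smul_eq_mul, mul_pow, ← Finset.mul_sum]
  rw [hcross]
  simp only [hadamard_apply, ← sq]
  field_simp
  ring

theorem ciSup_sum_hadamard_sub_sum_sq {C : Matrix n n ℝ} (hC : IsSelfAdjoint C) {μ : ℝ}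
    (hμ : 0 < μ) :
    (⨆ A : {A : Matrix n n ℝ // A.IsSymm ∧ A.PosSemidef},
        ∑ i, ∑ j, ((A : Matrix n n ℝ) ⊙ C) i j - μ / 2 * ∑ i, ∑ j, (A : Matrix n n ℝ) i j ^ 2) =
      1 / (2 * μ) * ∑ i, ∑ j, C⁺ i j ^ 2 := by
  have upper (A : {A : Matrix n n ℝ // A.IsSymm ∧ A.PosSemidef}) :=
    sum_hadamard_sub_sum_sq_le_of_posSemidef A.2.2 hC hμ
  have hmaximizer : (μ⁻¹ • C⁺).PosSemidef :=
    (CFC.posPart_nonneg C).posSemidef.smul (inv_nonneg.mpr hμ.le)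
  let maximizer : {A : Matrix n n ℝ // A.IsSymm ∧ A.PosSemidef} :=
    ⟨μ⁻¹ • C⁺, isHermitian_iff_isSymm.mp hmaximizer.isHermitian, hmaximizer⟩
  have : Nonempty {A : Matrix n n ℝ // A.IsSymm ∧ A.PosSemidef} := ⟨maximizer⟩
  exact le_antisymm (ciSup_le upper) (le_ciSup_of_le ⟨_, Set.forall_mem_range.mpr upper⟩
    maximizer (sum_hadamard_sub_sum_sq_inv_smul_posPart hC hμ).ge)

end Matrix

theorem stmt3_general {d : ℕ} (lam1 lam2 : ℝ) (h2 : 0 < lam2)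
    (B : Matrix (Fin d) (Fin d) ℝ) (hB : B.IsSymm) :
    (⨆ A : {A : Matrix (Fin d) (Fin d) ℝ // A.IsSymm ∧ A.PosSemidef},
        (∑ i, ∑ j, (A : Matrix (Fin d) (Fin d) ℝ) i j * B i j)
          - (lam1 * (A : Matrix (Fin d) (Fin d) ℝ).trace
              + lam2 / 2 * ∑ i, ∑ j, ((A : Matrix (Fin d) (Fin d) ℝ) i j) ^ 2)) =
      1 / (2 * lam2) *
        ∑ i, ∑ j, ((cfc (fun x : ℝ => max x 0) (B - lam1 • (1 : Matrix (Fin d) (Fin d) ℝ))) i j) ^ 2 := by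
  set C := B - lam1 • (1 : Matrix (Fin d) (Fin d) ℝ)
  have hC : IsSelfAdjoint C := isHermitian_iff_isSymm.mpr (hB.sub (isSymm_one.smul lam1))
  have objective (A : Matrix (Fin d) (Fin d) ℝ) :
      ∑ i, ∑ j, A i j * B i j - (lam1 * A.trace + lam2 / 2 * ∑ i, ∑ j, A i j ^ 2) =
        ∑ i, ∑ j, (A ⊙ C) i j - lam2 / 2 * ∑ i, ∑ j, A i j ^ 2 := by
    rw [sum_hadamard_sub_smul_one]
    simp only [hadamard_apply]
    ring
  have hpos : cfc (fun x : ℝ => max x 0) C = C⁺ := by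
    rw [CFC.posPart_def, cfcₙ_eq_cfc]
    rfl
  simp_rw [objective, hpos]
  exact ciSup_sum_hadamard_sub_sum_sq hC h2

/-- Fenchel conjugate of `Ω(A) = λ₁ tr A + (λ₂/2)‖A‖_F²` (on PSD symmetric
matrices, `+∞` elsewhere): `Ω*(B) = (1/(2λ₂)) ‖[B − λ₁ I]₊‖_F²`, where `[M]₊` is the
positive part (via continuous functional calculus). -/
theorem stmt3 {d : ℕ} (lam1 lam2 : ℝ) (h1 : 0 ≤ lam1) (h2 : 0 < lam2)
    (B : Matrix (Fin d) (Fin d) ℝ) (hB : B.IsSymm) :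
    (⨆ A : {A : Matrix (Fin d) (Fin d) ℝ // A.IsSymm ∧ A.PosSemidef},
        (∑ i, ∑ j, (A : Matrix (Fin d) (Fin d) ℝ) i j * B i j)
          - (lam1 * (A : Matrix (Fin d) (Fin d) ℝ).trace
              + lam2 / 2 * ∑ i, ∑ j, ((A : Matrix (Fin d) (Fin d) ℝ) i j) ^ 2)) =
      1 / (2 * lam2) *
        ∑ i, ∑ j, ((cfc (fun x : ℝ => max x 0) (B - lam1 • (1 : Matrix (Fin d) (Fin d) ℝ))) i j) ^ 2 :=
  stmt3_general lam1 lam2 h2 B hB
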